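/- arXiv:1603.06163 — 3 statements merged into one kernel-verified Lean document; each statement's English description precedes it below -/
import Mathlib

section
/- Let c : X* → ℝ be a formal power series whose coefficients satisfy |(c,η)| ≤ K M^{|η|} |η|! for all words η (local convergence bound), let u : [t0, t0+T] → ℝ^m be measurable with |u_i(t)| ≤ R a.e., and set R̄ := max(R,1). If (m+1) M R̄ T < 1, then for every t ∈ [t0, t0+T] the family (|(c,η)| · |E_η[u](t,t0)|)_{η ∈ X*} is summable, and the Fliess series F_c[u](t) = Σ_{η ∈ X*} (c,η) E_η[u](t,t0) satisfies |F_c[u](t)| ≤ K / (1 − (m+1) M R̄ (t − t0)). -/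
/-!
By induction on the word, `|E_η[u](t,t0)| ≤ R̄^|η| (t - t0)^|η| / |η|!`: each integration
multiplies by `|u_i| ≤ R̄` and integrates `(τ - t0)^n / n!`. The factorial cancels against the
one in the coefficient bound, so the `η`-th term is at most `K q^|η|` with `q = M R̄ (t - t0)`.
Grouping words by length, there are `(m+1)^k` of length `k`, and the dominating series is the
geometric series `∑ K ((m+1) q)^k = K / (1 - (m+1) q)`.
-/

open MeasureTheory

/-- Extend `u : ℝ → ℝ^m` to the alphabet `X = {x_0, x_1, …, x_m}` by `u_0 ≡ 1`. -/
noncomputable def uext (m : ℕ) (u : ℝ → Fin m → ℝ) : ℝ → Fin (m + 1) → ℝ :=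
  fun t => Fin.cases 1 (fun j => u t j)

/-- Iterated integrals `E_η[u](t, t0)`: `E_∅[u] ≡ 1` and
`E_{x_i η̄}[u](t,t0) = ∫_{t0}^t u_i(τ) E_{η̄}[u](τ,t0) dτ`. -/
noncomputable def iterInt (m : ℕ) (u : ℝ → Fin m → ℝ) (t0 : ℝ) :
    List (Fin (m + 1)) → ℝ → ℝ
  | [] => fun _ => 1
  | i :: w => fun t => ∫ τ in t0..t, uext m u τ i * iterInt m u t0 w τ

open Set Filter
open scoped Nat

theorem hasSum_pow_length {α : Type*} [Fintype α] {q : ℝ} (hq0 : 0 ≤ q)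
    (hq : Fintype.card α * q < 1) :
    HasSum (fun l : List α => q ^ l.length) (1 - Fintype.card α * q)⁻¹ := by
  set f : (Σ n, Fin n → α) → ℝ := fun p => q ^ p.1
  have hf_eq : (fun l : List α => q ^ l.length) ∘ List.equivSigmaTuple.symm = f := by
    ext p
    simp [f, List.equivSigmaTuple]
  have hfiber :
      ∀ n, HasSum (fun v : Fin n → α => f ⟨n, v⟩) ((Fintype.card α * q) ^ n) := by
    intro n
    have hsum : ∑ v : Fin n → α, f ⟨n, v⟩ = (Fintype.card α * q) ^ n := by
      simp [f, mul_pow]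
    exact hsum ▸ hasSum_fintype _
  have hgeom := hasSum_geometric_of_lt_one (by positivity) hq
  have hf : Summable f :=
    (summable_sigma_of_nonneg fun p => by positivity).2
      ⟨fun n => (hfiber n).summable, by simpa only [(hfiber _).tsum_eq] using hgeom.summable⟩
  rw [← List.equivSigmaTuple.symm.hasSum_iff, hf_eq]
  exact (hf.hasSum.sigma hfiber).unique hgeom ▸ hf.hasSum

theorem abs_tsum_le_of_abs_le_pow_length {α : Type*} [Fintype α] {f : List α → ℝ} {K q : ℝ}
    (hq0 : 0 ≤ q) (hq : Fintype.card α * q < 1) (hf : ∀ l, |f l| ≤ K * q ^ l.length) :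
    Summable (fun l => |f l|) ∧ |∑' l, f l| ≤ K / (1 - Fintype.card α * q) := by
  have hdom := (hasSum_pow_length hq0 hq).mul_left K
  exact ⟨hdom.summable.of_nonneg_of_le (fun _ => abs_nonneg _) hf,
    div_eq_mul_inv K _ ▸ tsum_of_norm_bounded (f := f) hdom hf⟩

theorem integral_sub_pow_div_factorial (a t : ℝ) (n : ℕ) :
    ∫ τ in a..t, (τ - a) ^ n / n ! = (t - a) ^ (n + 1) / (n + 1)! := by
  rw [intervalIntegral.integral_div, intervalIntegral.integral_comp_sub_right (· ^ n) a,
    sub_self, integral_pow, Nat.factorial_succ]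
  push_cast
  field_simp
  ring

theorem continuousOn_primitive_mul_and_abs_le {a b C D : ℝ} {n : ℕ} {v f : ℝ → ℝ}
    (hv : AEStronglyMeasurable v (volume.restrict (Icc a b)))
    (hvC : ∀ᵐ τ ∂volume.restrict (Icc a b), |v τ| ≤ C)
    (hf : ContinuousOn f (Icc a b))
    (hfD : ∀ τ ∈ Icc a b, |f τ| ≤ D * ((τ - a) ^ n / n !)) :
    ContinuousOn (fun t => ∫ τ in a..t, v τ * f τ) (Icc a b) ∧
      ∀ t ∈ Icc a b,
        |∫ τ in a..t, v τ * f τ| ≤ C * D * ((t - a) ^ (n + 1) / (n + 1)!) := by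
  set g : ℝ → ℝ := fun τ => C * D * ((τ - a) ^ n / n !)
  have hg : Continuous g := by fun_prop
  have hdom : ∀ᵐ τ ∂volume.restrict (Icc a b), ‖v τ * f τ‖ ≤ g τ := by
    filter_upwards [hvC, ae_restrict_mem measurableSet_Icc] with τ hvτ hτ
    simp only [norm_mul, g, mul_assoc]
    exact mul_le_mul hvτ (hfD τ hτ) (norm_nonneg _) ((abs_nonneg _).trans hvτ)
  refine ⟨?_, fun t ht => ?_⟩
  · rcases le_or_gt a b with hab | hab
    · have hint : IntegrableOn (fun τ => v τ * f τ) (Icc a b) :=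
        hg.integrableOn_Icc.mono' (hv.mul (hf.aestronglyMeasurable measurableSet_Icc)) hdom
      rw [← uIcc_of_le hab] at hint ⊢
      exact intervalIntegral.continuousOn_primitive_interval hint
    · simp [Icc_eq_empty_of_lt hab]
  · have hdom' : ∀ᵐ τ, τ ∈ Ioc a t → ‖v τ * f τ‖ ≤ g τ := by
      filter_upwards [(ae_restrict_iff' measurableSet_Icc).1 hdom] with τ h hτ
      exact h ⟨hτ.1.le, hτ.2.trans ht.2⟩
    calc |∫ τ in a..t, v τ * f τ| ≤ ∫ τ in a..t, g τ :=
          intervalIntegral.norm_integral_le_of_norm_le ht.1 hdom' (hg.intervalIntegrable _ _)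
      _ = C * D * ((t - a) ^ (n + 1) / (n + 1)!) := by
          rw [intervalIntegral.integral_const_mul, integral_sub_pow_div_factorial]

theorem measurable_uext {m : ℕ} {u : ℝ → Fin m → ℝ} (hmeas : ∀ i, Measurable fun t => u t i)
    (i : Fin (m + 1)) : Measurable fun t => uext m u t i := by
  cases i using Fin.cases with
  | zero => exact measurable_const
  | succ j => exact hmeas j

theorem ae_abs_uext_le_max_one {m : ℕ} {u : ℝ → Fin m → ℝ} {R : ℝ} {μ : Measure ℝ}
    (hbd : ∀ i, ∀ᵐ t ∂μ, |u t i| ≤ R) (i : Fin (m + 1)) :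
    ∀ᵐ t ∂μ, |uext m u t i| ≤ max R 1 := by
  cases i using Fin.cases with
  | zero => exact Eventually.of_forall fun t => by simp [uext]
  | succ j => filter_upwards [hbd j] with t ht using ht.trans (le_max_left _ _)

theorem iterInt_continuousOn_and_abs_le {m : ℕ} {u : ℝ → Fin m → ℝ} {t0 t1 R : ℝ}
    (hmeas : ∀ i, Measurable fun t => u t i)
    (hbd : ∀ i, ∀ᵐ t ∂volume.restrict (Icc t0 t1), |u t i| ≤ R) (w : List (Fin (m + 1))) :
    ContinuousOn (iterInt m u t0 w) (Icc t0 t1) ∧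
      ∀ t ∈ Icc t0 t1,
        |iterInt m u t0 w t| ≤ max R 1 ^ w.length * ((t - t0) ^ w.length / w.length !) := by
  induction w with
  | nil => exact ⟨continuousOn_const, fun t _ => by simp [iterInt]⟩
  | cons i w ih =>
    simpa only [iterInt, List.length_cons, pow_succ', mul_assoc] using
      continuousOn_primitive_mul_and_abs_le (measurable_uext hmeas i).aestronglyMeasurable
        (ae_abs_uext_le_max_one hbd i) ih.1 ih.2

theorem fliess_local_convergence_general (m : ℕ) (t0 T K M R : ℝ)
    (hM : 0 < M)
    (c : List (Fin (m + 1)) → ℝ)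
    (hc : ∀ η : List (Fin (m + 1)),
      |c η| ≤ K * M ^ η.length * (Nat.factorial η.length : ℝ))
    (u : ℝ → Fin m → ℝ) (hmeas : ∀ i, Measurable fun t => u t i)
    (hbd : ∀ i, ∀ᵐ t ∂(volume.restrict (Set.Icc t0 (t0 + T))), |u t i| ≤ R)
    (hsmall : (m + 1 : ℝ) * M * max R 1 * T < 1) :
    ∀ t ∈ Set.Icc t0 (t0 + T),
      Summable (fun η : List (Fin (m + 1)) => |c η| * |iterInt m u t0 η t|) ∧
      |∑' η : List (Fin (m + 1)), c η * iterInt m u t0 η t| ≤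
        K / (1 - (m + 1 : ℝ) * M * max R 1 * (t - t0)) := by
  intro t ht
  set q := M * max R 1 * (t - t0)
  have hq0 : 0 ≤ q := mul_nonneg (by positivity) (sub_nonneg.2 ht.1)
  have hcard : (Fintype.card (Fin (m + 1)) : ℝ) * q = (m + 1) * M * max R 1 * (t - t0) := by
    simp only [q, Fintype.card_fin]
    push_cast
    ring
  have hq1 : (Fintype.card (Fin (m + 1)) : ℝ) * q < 1 :=
    hcard ▸ (mul_le_mul_of_nonneg_left (by linarith [ht.2]) (by positivity)).trans_lt hsmall
  have hterm : ∀ η, |c η * iterInt m u t0 η t| ≤ K * q ^ η.length := by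
    intro η
    have hE := (iterInt_continuousOn_and_abs_le hmeas hbd η).2 t ht
    calc |c η * iterInt m u t0 η t|
        ≤ K * M ^ η.length * η.length ! *
            (max R 1 ^ η.length * ((t - t0) ^ η.length / η.length !)) := by
          rw [abs_mul]
          exact mul_le_mul (hc η) hE (abs_nonneg _) ((abs_nonneg _).trans (hc η))
      _ = K * q ^ η.length := by
          simp only [q, mul_pow]
          field_simp
  obtain ⟨hsum, hle⟩ := abs_tsum_le_of_abs_le_pow_length hq0 hq1 hterm
  exact ⟨by simpa only [abs_mul] using hsum, hcard ▸ hle⟩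

/-- Local convergence of Fliess operators.  If `|(c,η)| ≤ K M^{|η|} |η|!`,
`|u_i| ≤ R` a.e. on `[t0, t0+T]`, `R̄ = max R 1`, and `(m+1) M R̄ T < 1`, then for every
`t ∈ [t0, t0+T]` the family `(|(c,η)| |E_η[u](t,t0)|)_η` is summable and
`|F_c[u](t)| ≤ K / (1 − (m+1) M R̄ (t − t0))`. -/
theorem fliess_local_convergence (m : ℕ) (t0 T K M R : ℝ)
    (hK : 0 < K) (hM : 0 < M) (hT : 0 < T)
    (c : List (Fin (m + 1)) → ℝ)
    (hc : ∀ η : List (Fin (m + 1)),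
      |c η| ≤ K * M ^ η.length * (Nat.factorial η.length : ℝ))
    (u : ℝ → Fin m → ℝ) (hmeas : ∀ i, Measurable fun t => u t i)
    (hbd : ∀ i, ∀ᵐ t ∂(volume.restrict (Set.Icc t0 (t0 + T))), |u t i| ≤ R)
    (hsmall : (m + 1 : ℝ) * M * max R 1 * T < 1) :
    ∀ t ∈ Set.Icc t0 (t0 + T),
      Summable (fun η : List (Fin (m + 1)) => |c η| * |iterInt m u t0 η t|) ∧
      |∑' η : List (Fin (m + 1)), c η * iterInt m u t0 η t| ≤
        K / (1 - (m + 1 : ℝ) * M * max R 1 * (t - t0)) :=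
  fliess_local_convergence_general m t0 T K M R hM c hc u hmeas hbd hsmall
end

section
/- Let u : [t0,t1] → ℝ^m be integrable in each component. Then for all words η, ξ over X = {x_0, x_1, …, x_m} and all t ∈ [t0,t1], the pointwise product of iterated integrals satisfies E_η[u](t,t0) · E_ξ[u](t,t0) = Σ_{ν ∈ X*} (η ⧢ ξ, ν) · E_ν[u](t,t0), where the sum is finite because (η ⧢ ξ, ν) = 0 unless |ν| = |η| + |ξ|. -/
open MeasureTheory

/-- `shuffleCoeff η ξ ν` is the coefficient `(η ⧢ ξ, ν)` of the word `ν` in the shuffle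
product of the words `η` and `ξ`, defined inductively by `η ⧢ ∅ = ∅ ⧢ η = η` and
`(x_i η) ⧢ (x_j ξ) = x_i (η ⧢ (x_j ξ)) + x_j ((x_i η) ⧢ ξ)`. -/
def shuffleCoeff {A : Type*} [DecidableEq A] : List A → List A → List A → ℝ
  | [], ξ, ν => if ν = ξ then 1 else 0
  | η, [], ν => if ν = η then 1 else 0
  | _ :: _, _ :: _, [] => 0
  | a :: η, b :: ξ, z :: ν =>
      (if z = a then shuffleCoeff η (b :: ξ) ν else 0) +
      (if z = b then shuffleCoeff (a :: η) ξ ν else 0)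
termination_by _ _ ν => ν.length

/-! The shuffle relation is the recursion of integration by parts. The primitives
`E_{aη}(t) = ∫_{t0}^t u_a E_η` are absolutely continuous, so
`E_{aη} E_{bξ} = ∫ u_a E_η E_{bξ} + ∫ u_b E_{aη} E_ξ`; expanding the two inner products by
induction on the words and integrating once more turns them into the two sums in
`(aη) ⧢ (bξ) = a (η ⧢ bξ) + b (aη ⧢ ξ)`. Only words of length `|η| + |ξ|` occur, so the series
is a finite sum. -/

section Shuffle

variable {A : Type*} [DecidableEq A]

@[simp]
lemma shuffleCoeff_nil_left (ξ ν : List A) :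
    shuffleCoeff [] ξ ν = if ν = ξ then 1 else 0 := by
  rw [shuffleCoeff]

@[simp]
lemma shuffleCoeff_nil_right (η ν : List A) :
    shuffleCoeff η [] ν = if ν = η then 1 else 0 := by
  cases η with
  | nil => rw [shuffleCoeff]
  | cons a η => rw [shuffleCoeff]; exact List.cons_ne_nil a η

@[simp]
lemma shuffleCoeff_cons_cons_nil (a b : A) (η ξ : List A) :
    shuffleCoeff (a :: η) (b :: ξ) [] = 0 := by
  rw [shuffleCoeff]

lemma shuffleCoeff_cons_cons_cons (a b z : A) (η ξ ν : List A) :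
    shuffleCoeff (a :: η) (b :: ξ) (z :: ν) =
      (if z = a then shuffleCoeff η (b :: ξ) ν else 0) +
      (if z = b then shuffleCoeff (a :: η) ξ ν else 0) := by
  rw [shuffleCoeff]

lemma shuffleCoeff_eq_zero_of_length_ne {η ξ ν : List A}
    (h : ν.length ≠ η.length + ξ.length) : shuffleCoeff η ξ ν = 0 :=
  match η, ξ, ν with
  | [], _, _ => by rw [shuffleCoeff_nil_left, if_neg]; rintro rfl; simp at h
  | _ :: _, [], _ => by rw [shuffleCoeff_nil_right, if_neg]; rintro rfl; simp at h
  | _ :: _, _ :: _, [] => shuffleCoeff_cons_cons_nil ..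
  | _ :: _, _ :: _, _ :: _ => by
    simp only [List.length_cons] at h
    rw [shuffleCoeff_cons_cons_cons, shuffleCoeff_eq_zero_of_length_ne (by simp; omega),
      shuffleCoeff_eq_zero_of_length_ne (by simp; omega)]
    simp

def wordsOfLength (A : Type*) [Fintype A] [DecidableEq A] : ℕ → Finset (List A)
  | 0 => {[]}
  | n + 1 => (Finset.univ ×ˢ wordsOfLength A n).image fun p => p.1 :: p.2

variable [Fintype A]

@[simp]
lemma mem_wordsOfLength {n : ℕ} {ν : List A} : ν ∈ wordsOfLength A n ↔ ν.length = n := by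
  induction n generalizing ν with
  | zero => simp [wordsOfLength]
  | succ n ih => cases ν <;> simp [wordsOfLength, ih]

lemma sum_wordsOfLength_succ {M : Type*} [AddCommMonoid M] (n : ℕ) (g : List A → M) :
    ∑ ν ∈ wordsOfLength A (n + 1), g ν = ∑ z, ∑ ν ∈ wordsOfLength A n, g (z :: ν) := by
  rw [wordsOfLength, Finset.sum_image fun p _ q _ h => Prod.ext (List.cons.inj h).1
    (List.cons.inj h).2, Finset.sum_product]

lemma sum_shuffleCoeff_cons_cons (n : ℕ) (a b : A) (η ξ : List A) (g : List A → ℝ) :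
    ∑ ν ∈ wordsOfLength A (n + 1), shuffleCoeff (a :: η) (b :: ξ) ν * g ν =
      ∑ ν ∈ wordsOfLength A n, shuffleCoeff η (b :: ξ) ν * g (a :: ν) +
      ∑ ν ∈ wordsOfLength A n, shuffleCoeff (a :: η) ξ ν * g (b :: ν) := by
  simp only [sum_wordsOfLength_succ, shuffleCoeff_cons_cons_cons, add_mul, ite_mul, zero_mul,
    Finset.sum_add_distrib]
  rw [Finset.sum_comm, Finset.sum_comm (γ := A)]
  simp only [Finset.sum_ite_eq', Finset.mem_univ, if_true]

end Shuffle

/-- Integration by parts for primitives of integrable functions: these are only absolutely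
continuous, so the product rule holds just almost everywhere. -/
theorem intervalIntegral.integral_mul_integral_eq_add {f g : ℝ → ℝ} {a b : ℝ}
    (hf : IntervalIntegrable f volume a b) (hg : IntervalIntegrable g volume a b) :
    (∫ x in a..b, f x) * (∫ x in a..b, g x) =
      (∫ x in a..b, f x * ∫ y in a..x, g y) + ∫ x in a..b, (∫ y in a..x, f y) * g x := by
  have hF := hf.absolutelyContinuousOnInterval_intervalIntegral (c := a) Set.left_mem_uIcc
  have hG := hg.absolutelyContinuousOnInterval_intervalIntegral (c := a) Set.left_mem_uIcc
  have hparts := hF.integral_deriv_mul_eq_sub hG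
  simp only [intervalIntegral.integral_same, mul_zero, sub_zero] at hparts
  rw [← hparts, ← intervalIntegral.integral_add (hf.mul_continuousOn hG.continuousOn)
    (hg.continuousOn_mul hF.continuousOn)]
  refine intervalIntegral.integral_congr_ae ?_
  filter_upwards [hf.ae_hasDerivAt_integral, hg.ae_hasDerivAt_integral] with x hfx hgx hx
  have hx' := Set.uIoc_subset_uIcc hx
  rw [(hfx hx' a Set.left_mem_uIcc).deriv, (hgx hx' a Set.left_mem_uIcc).deriv]

section IteratedIntegrals

variable {m : ℕ} {u : ℝ → Fin m → ℝ} {t0 t1 : ℝ}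

lemma intervalIntegrable_uext (hu : ∀ j, IntervalIntegrable (fun t => u t j) volume t0 t1)
    (i : Fin (m + 1)) : IntervalIntegrable (fun t => uext m u t i) volume t0 t1 := by
  cases i using Fin.cases with
  | zero => simp [uext]
  | succ j => simpa [uext] using hu j

lemma intervalIntegrable_uext_mul_iterInt
    (hu : ∀ i, IntervalIntegrable (fun t => uext m u t i) volume t0 t1)
    (i : Fin (m + 1)) (w : List (Fin (m + 1))) :
    IntervalIntegrable (fun τ => uext m u τ i * iterInt m u t0 w τ) volume t0 t1 := by
  cases w with
  | nil => simpa [iterInt] using hu i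
  | cons j w =>
    have hw := intervalIntegrable_uext_mul_iterInt hu j w
    exact (hu i).mul_continuousOn
      (hw.absolutelyContinuousOnInterval_intervalIntegral Set.left_mem_uIcc).continuousOn

lemma integral_uext_mul_of_eq_sum_iterInt
    (hu : ∀ i, IntervalIntegrable (fun t => uext m u t i) volume t0 t1)
    (i : Fin (m + 1)) (s : Finset (List (Fin (m + 1)))) (c : List (Fin (m + 1)) → ℝ)
    {F : ℝ → ℝ} (hF : ∀ x ∈ Set.uIcc t0 t1, F x = ∑ ν ∈ s, c ν * iterInt m u t0 ν x)
    {t : ℝ} (ht : t ∈ Set.uIcc t0 t1) :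
    ∫ x in t0..t, uext m u x i * F x = ∑ ν ∈ s, c ν * iterInt m u t0 (i :: ν) t := by
  have hsub := Set.uIcc_subset_uIcc_left ht
  have hint ν : IntervalIntegrable (fun x => uext m u x i * iterInt m u t0 ν x) volume t0 t :=
    (intervalIntegrable_uext_mul_iterInt hu i ν).mono_set hsub
  calc ∫ x in t0..t, uext m u x i * F x
      = ∫ x in t0..t, ∑ ν ∈ s, c ν * (uext m u x i * iterInt m u t0 ν x) :=
        intervalIntegral.integral_congr fun x hx => by
          rw [hF x (hsub hx), Finset.mul_sum]
          exact Finset.sum_congr rfl fun ν _ => mul_left_comm _ _ _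
    _ = ∑ ν ∈ s, c ν * iterInt m u t0 (i :: ν) t := by
        rw [intervalIntegral.integral_finsetSum fun ν _ => (hint ν).const_mul _]
        simp only [intervalIntegral.integral_const_mul, iterInt]

theorem iterInt_mul_iterInt_eq_sum
    (hu : ∀ i, IntervalIntegrable (fun t => uext m u t i) volume t0 t1)
    (η ξ : List (Fin (m + 1))) {t : ℝ} (ht : t ∈ Set.uIcc t0 t1) :
    iterInt m u t0 η t * iterInt m u t0 ξ t =
      ∑ ν ∈ wordsOfLength _ (η.length + ξ.length), shuffleCoeff η ξ ν * iterInt m u t0 ν t := by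
  induction η generalizing ξ t with
  | nil => simp [iterInt]
  | cons a η ihη =>
    induction ξ generalizing t with
    | nil => simp [iterInt]
    | cons b ξ ihξ =>
      have hsub := Set.uIcc_subset_uIcc_left ht
      have hlen : (a :: η).length + ξ.length = η.length + (b :: ξ).length := by simp; omega
      rw [show (a :: η).length + (b :: ξ).length = η.length + (b :: ξ).length + 1 by simp; omega]
      calc iterInt m u t0 (a :: η) t * iterInt m u t0 (b :: ξ) t
          = (∫ x in t0..t, uext m u x a * iterInt m u t0 η x * iterInt m u t0 (b :: ξ) x) +
              ∫ x in t0..t, iterInt m u t0 (a :: η) x * (uext m u x b * iterInt m u t0 ξ x) :=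
            intervalIntegral.integral_mul_integral_eq_add
              ((intervalIntegrable_uext_mul_iterInt hu a η).mono_set hsub)
              ((intervalIntegrable_uext_mul_iterInt hu b ξ).mono_set hsub)
        _ = (∫ x in t0..t, uext m u x a * (iterInt m u t0 η x * iterInt m u t0 (b :: ξ) x)) +
              ∫ x in t0..t, uext m u x b * (iterInt m u t0 (a :: η) x * iterInt m u t0 ξ x) := by
            congr 1 <;> exact intervalIntegral.integral_congr fun x _ => by ring
        _ = _ := by
            rw [integral_uext_mul_of_eq_sum_iterInt hu a _ _ (fun x hx => ihη _ hx) ht,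
              integral_uext_mul_of_eq_sum_iterInt hu b _ _ (fun x hx => ihξ hx) ht, hlen,
              sum_shuffleCoeff_cons_cons]

end IteratedIntegrals

theorem iterInt_shuffle_general (m : ℕ) (t0 t1 : ℝ)
    (u : ℝ → Fin m → ℝ)
    (hint : ∀ i, IntegrableOn (fun t => u t i) (Set.Icc t0 t1)) :
    ∀ η ξ : List (Fin (m + 1)),
      (∀ ν : List (Fin (m + 1)), ν.length ≠ η.length + ξ.length →
        shuffleCoeff η ξ ν = 0) ∧
      ∀ t ∈ Set.Icc t0 t1,
        iterInt m u t0 η t * iterInt m u t0 ξ t =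
          ∑' ν : List (Fin (m + 1)), shuffleCoeff η ξ ν * iterInt m u t0 ν t := by
  intro η ξ
  refine ⟨fun ν => shuffleCoeff_eq_zero_of_length_ne, fun t ht => ?_⟩
  have hu j : IntervalIntegrable (fun t => u t j) volume t0 t1 :=
    (intervalIntegrable_iff_integrableOn_Icc_of_le (ht.1.trans ht.2)).2 (hint j)
  rw [tsum_eq_sum fun ν hν => by
    rw [shuffleCoeff_eq_zero_of_length_ne (mt mem_wordsOfLength.2 hν), zero_mul]]
  exact iterInt_mul_iterInt_eq_sum (intervalIntegrable_uext hu) η ξ (Set.Icc_subset_uIcc ht)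

/-- The shuffle-product identity for iterated integrals: for integrable `u`, all words
`η, ξ` and `t ∈ [t0,t1]`,
`E_η[u](t,t0) E_ξ[u](t,t0) = Σ_ν (η ⧢ ξ, ν) E_ν[u](t,t0)`, where the sum is finite
since `(η ⧢ ξ, ν) = 0` unless `|ν| = |η| + |ξ|`. -/
theorem iterInt_shuffle (m : ℕ) (t0 t1 : ℝ) (hlt : t0 < t1)
    (u : ℝ → Fin m → ℝ)
    (hint : ∀ i, IntegrableOn (fun t => u t i) (Set.Icc t0 t1)) :
    ∀ η ξ : List (Fin (m + 1)),
      (∀ ν : List (Fin (m + 1)), ν.length ≠ η.length + ξ.length →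
        shuffleCoeff η ξ ν = 0) ∧
      ∀ t ∈ Set.Icc t0 t1,
        iterInt m u t0 η t * iterInt m u t0 ξ t =
          ∑' ν : List (Fin (m + 1)), shuffleCoeff η ξ ν * iterInt m u t0 ν t :=
  iterInt_shuffle_general m t0 t1 u hint
end

section
/- Let L > 0, k ∈ ℝ, and let x, y, θ, α : [0,T] → ℝ be differentiable functions satisfying the bi-steerable car kinematics ẋ(t) = u1(t) cos(θ(t)+α(t)), ẏ(t) = u1(t) sin(θ(t)+α(t)), θ̇(t) = u1(t) sin((1−k)α(t)) / (L cos(kα(t))), α̇(t) = u2(t), with cos(kα(t)) ≠ 0 for all t. Define the rear axle position (x_rear, y_rear) := (x − L cos θ, y − L sin θ). Then both rolling-without-slippage constraints hold for all t: ẏ(t) cos(θ(t)+α(t)) − ẋ(t) sin(θ(t)+α(t)) = 0 and ẏ_rear(t) cos(θ(t)+kα(t)) − ẋ_rear(t) sin(θ(t)+kα(t)) = 0. -/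
open Real

/-- For a bi-steerable car with wheelbase `L > 0`, rear steering ratio `k`, front-axle
position `(x,y)`, orientation `θ` and front steering angle `α` satisfying the kinematics
`ẋ = u1 cos(θ+α)`, `ẏ = u1 sin(θ+α)`, `θ̇ = u1 sin((1−k)α)/(L cos(kα))`, `α̇ = u2`
(with `cos(kα) ≠ 0`), both rolling-without-slippage constraints hold on `[0,T]`:
`ẏ cos(θ+α) − ẋ sin(θ+α) = 0` for the front axle and, for the rear axle position
`(x_rear, y_rear) = (x − L cos θ, y − L sin θ)`,
`ẏ_rear cos(θ+kα) − ẋ_rear sin(θ+kα) = 0`. -/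
theorem bisteerable_rolling_constraints (L k T : ℝ) (hL : 0 < L)
    (x y θ α u1 u2 : ℝ → ℝ)
    (hx : ∀ t ∈ Set.Icc (0 : ℝ) T,
      HasDerivAt x (u1 t * Real.cos (θ t + α t)) t)
    (hy : ∀ t ∈ Set.Icc (0 : ℝ) T,
      HasDerivAt y (u1 t * Real.sin (θ t + α t)) t)
    (hθ : ∀ t ∈ Set.Icc (0 : ℝ) T,
      HasDerivAt θ (u1 t * Real.sin ((1 - k) * α t) / (L * Real.cos (k * α t))) t)
    (hα : ∀ t ∈ Set.Icc (0 : ℝ) T, HasDerivAt α (u2 t) t)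
    (hcos : ∀ t ∈ Set.Icc (0 : ℝ) T, Real.cos (k * α t) ≠ 0) :
    ∀ t ∈ Set.Icc (0 : ℝ) T,
      deriv y t * Real.cos (θ t + α t) - deriv x t * Real.sin (θ t + α t) = 0 ∧
      deriv (fun s => y s - L * Real.sin (θ s)) t * Real.cos (θ t + k * α t) -
        deriv (fun s => x s - L * Real.cos (θ s)) t * Real.sin (θ t + k * α t) = 0 := by
  intro t ht
  have hθ' := hθ t ht
  have hx' := hx t ht
  have hy' := hy t ht
  have hc := hcos t ht
  set θ' := u1 t * Real.sin ((1 - k) * α t) / (L * Real.cos (k * α t)) with hθ'def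
  have hyr : HasDerivAt (fun s => y s - L * Real.sin (θ s))
      (u1 t * Real.sin (θ t + α t) - L * (Real.cos (θ t) * θ')) t := by
    exact hy'.sub (((hθ'.sin)).const_mul L)
  have hxr : HasDerivAt (fun s => x s - L * Real.cos (θ s))
      (u1 t * Real.cos (θ t + α t) - L * (-Real.sin (θ t) * θ')) t := by
    exact hx'.sub (((hθ'.cos)).const_mul L)
  refine ⟨?_, ?_⟩
  · rw [hy'.deriv, hx'.deriv]; ring
  · rw [hyr.deriv, hxr.deriv]
    have key : Real.sin (θ t + α t) * Real.cos (θ t + k * α t) -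
        Real.cos (θ t + α t) * Real.sin (θ t + k * α t) = Real.sin ((1 - k) * α t) := by
      rw [← Real.sin_sub]; ring_nf
    have key2 : Real.cos (θ t) * Real.cos (θ t + k * α t) +
        Real.sin (θ t) * Real.sin (θ t + k * α t) = Real.cos (k * α t) := by
      rw [← Real.cos_sub, show θ t - (θ t + k * α t) = -(k * α t) by ring, Real.cos_neg]
    have hLc : L * Real.cos (k * α t) ≠ 0 := mul_ne_zero hL.ne' hc
    have hθval : θ' * (L * Real.cos (k * α t)) = u1 t * Real.sin ((1 - k) * α t) := by
      rw [hθ'def]; field_simp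
    clear_value θ'
    linear_combination u1 t * key - L * θ' * key2 - hθval
end
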